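/- arXiv:1801.00978 — 4 statements merged into one kernel-verified Lean document; each statement's English description precedes it below -/
import Mathlib

section
/- Let H be a real Hilbert space and V, Ṽ closed subspaces of H with V ≠ {0} and Ṽ ≠ {0}. Suppose Q : H → H is a bounded linear projector (Q∘Q = Q) with range Q = V and range(I − Q) = Ṽ^⊥. Then the inf-sup constant of the pair (V, Ṽ) is positive, it equals the inf-sup constant of the pair (Ṽ, V), and its common value equals ‖Q‖^{-1}. -/
/-!
Let `P` be the orthogonal projection onto `W`. For fixed `v` the supremum over `w ∈ W` of
`⟪v, w⟫ / (‖v‖ ‖w‖)` is `‖P v‖ / ‖v‖`, attained at `w = P v`. Since `ker Q = Wᗮ` we have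
`Q ∘ P = Q` and `P ∘ Q = P`, so `Q` inverts `P` on `V`: `‖v‖ = ‖Q (P v)‖ ≤ ‖Q‖ ‖P v‖` for
`v ∈ V`, and `m ‖Q x‖ ≤ ‖P (Q x)‖ = ‖P x‖ ≤ ‖x‖` where `m` is the infimum of `‖P v‖ / ‖v‖`.
Hence `m = ‖Q‖⁻¹`. The adjoint `Q†` is an idempotent with range `W`, kernel `Vᗮ` and the same
norm as `Q`, which exchanges the roles of `V` and `W`.
-/

open scoped RealInnerProductSpace

/-- The inf-sup constant `inf_{0≠v∈V} sup_{0≠w∈W} ⟨v,w⟩_H/(‖v‖_H ‖w‖_H)` of a pair of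
subspaces of a real Hilbert space. -/
noncomputable def infSupConst {H : Type*} [NormedAddCommGroup H] [InnerProductSpace ℝ H]
    (V W : Submodule ℝ H) : ℝ :=
  ⨅ v : {v : V // v ≠ 0}, ⨆ w : {w : W // w ≠ 0},
    ⟪((v : V) : H), ((w : W) : H)⟫ / (‖((v : V) : H)‖ * ‖((w : W) : H)‖)

open scoped InnerProduct

namespace Submodule

variable {H : Type*} [NormedAddCommGroup H] [InnerProductSpace ℝ H]

theorem iSup_inner_div_norm_mul_norm (W : Submodule ℝ H) [W.HasOrthogonalProjection] (v : H) :
    ⨆ w : {w : W // w ≠ 0}, ⟪v, ((w : W) : H)⟫ / (‖v‖ * ‖((w : W) : H)‖) =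
      ‖W.starProjection v‖ / ‖v‖ := by
  set p := W.starProjection v
  have hinner (w : W) : ⟪v, (w : H)⟫ = ⟪p, w⟫ := by
    rw [inner_starProjection_left_eq_right, starProjection_mem_subspace_eq_self]
  have hle (w : {w : W // w ≠ 0}) :
      ⟪v, ((w : W) : H)⟫ / (‖v‖ * ‖((w : W) : H)‖) ≤ ‖p‖ / ‖v‖ := by
    have hw : ‖((w : W) : H)‖ ≠ 0 := by simpa using w.2
    calc ⟪v, ((w : W) : H)⟫ / (‖v‖ * ‖((w : W) : H)‖)
        ≤ ‖p‖ * ‖((w : W) : H)‖ / (‖v‖ * ‖((w : W) : H)‖) := by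
          rw [hinner]; gcongr; exact real_inner_le_norm _ _
      _ = ‖p‖ / ‖v‖ := mul_div_mul_right _ _ hw
  by_cases hp : p = 0
  · have hzero (w : {w : W // w ≠ 0}) :
        ⟪v, ((w : W) : H)⟫ / (‖v‖ * ‖((w : W) : H)‖) = 0 := by
      rw [hinner, hp, inner_zero_left, zero_div]
    rw [iSup_congr hzero, Real.iSup_const_zero, hp, norm_zero, zero_div]
  · let w₀ : {w : W // w ≠ 0} := ⟨⟨p, W.starProjection_apply_mem v⟩, by simpa using hp⟩
    have : Nonempty {w : W // w ≠ 0} := ⟨w₀⟩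
    refine le_antisymm (ciSup_le hle) (le_ciSup_of_le ⟨_, Set.forall_mem_range.2 hle⟩ w₀ ?_)
    rw [hinner, real_inner_self_eq_norm_mul_norm, mul_div_mul_right _ _ (norm_ne_zero_iff.2 hp)]

end Submodule

section ObliqueProjection

variable {H : Type*} [NormedAddCommGroup H] [InnerProductSpace ℝ H]
  {W : Submodule ℝ H} {Q : H →L[ℝ] H}

open ContinuousLinearMap

theorem norm_pos_of_range_ne_bot (h : Q.range ≠ ⊥) : 0 < ‖Q‖ :=
  norm_pos_iff.2 fun hQ => h (by simp [hQ])

theorem apply_eq_self_of_mem_range (hQ : IsIdempotentElem Q) {v : H} (hv : v ∈ Q.range) :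
    Q v = v := by
  obtain ⟨y, rfl⟩ := hv
  exact DFunLike.congr_fun hQ y

theorem ker_eq_of_range_id_sub_eq (hQ : IsIdempotentElem Q)
    (hcoran : (ContinuousLinearMap.id ℝ H - Q).range = Wᗮ) : Q.ker = Wᗮ := by
  rw [← hcoran, LinearMap.IsIdempotentElem.ker_eq_range (IsIdempotentElem.toLinearMap hQ)]
  rfl

variable [W.HasOrthogonalProjection]

theorem infSupConst_eq_iInf_norm_starProjection_div_norm (V : Submodule ℝ H) :
    infSupConst V W = ⨅ v : {v : V // v ≠ 0}, ‖W.starProjection v‖ / ‖((v : V) : H)‖ :=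
  iInf_congr fun v => W.iSup_inner_div_norm_mul_norm v

theorem apply_starProjection_of_ker_eq (hker : Q.ker = Wᗮ) (x : H) :
    Q (W.starProjection x) = Q x := by
  have h : x - W.starProjection x ∈ Q.ker := hker ▸ W.sub_starProjection_mem_orthogonal x
  rw [LinearMap.mem_ker, coe_coe, map_sub, sub_eq_zero] at h
  exact h.symm

theorem starProjection_apply_of_ker_eq (hQ : IsIdempotentElem Q) (hker : Q.ker = Wᗮ)
    (x : H) : W.starProjection (Q x) = W.starProjection x := by
  have h : x - Q x ∈ Wᗮ := hker ▸ by
    simpa [sub_eq_zero] using (apply_eq_self_of_mem_range hQ ⟨x, rfl⟩).symm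
  rw [← W.starProjection_apply_eq_zero_iff, map_sub, sub_eq_zero] at h
  exact h.symm

theorem norm_le_opNorm_mul_norm_starProjection (hQ : IsIdempotentElem Q)
    (hker : Q.ker = Wᗮ) {v : H} (hv : v ∈ Q.range) :
    ‖v‖ ≤ ‖Q‖ * ‖W.starProjection v‖ :=
  calc ‖v‖ = ‖Q (W.starProjection v)‖ := by
        rw [apply_starProjection_of_ker_eq hker, apply_eq_self_of_mem_range hQ hv]
    _ ≤ ‖Q‖ * ‖W.starProjection v‖ := Q.le_opNorm _

theorem mul_norm_apply_le_norm (hQ : IsIdempotentElem Q) (hker : Q.ker = Wᗮ) {m : ℝ}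
    (hm : ∀ v ∈ Q.range, m * ‖v‖ ≤ ‖W.starProjection v‖) (x : H) :
    m * ‖Q x‖ ≤ ‖x‖ :=
  calc m * ‖Q x‖ ≤ ‖W.starProjection (Q x)‖ := hm _ ⟨x, rfl⟩
    _ = ‖W.starProjection x‖ := by rw [starProjection_apply_of_ker_eq hQ hker]
    _ ≤ ‖x‖ := W.norm_starProjection_apply_le x

theorem infSupConst_eq_inv_opNorm (hQ : IsIdempotentElem Q) {V : Submodule ℝ H}
    (hran : Q.range = V) (hker : Q.ker = Wᗮ) (hV : V ≠ ⊥) :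
    infSupConst V W = ‖Q‖⁻¹ := by
  subst hran
  have hQ0 : 0 < ‖Q‖ := norm_pos_of_range_ne_bot hV
  have : Nonempty {v : Q.range // v ≠ 0} := by
    have := Submodule.nontrivial_iff_ne_bot.2 hV
    obtain ⟨v, hv⟩ := exists_ne (0 : Q.range)
    exact ⟨⟨v, hv⟩⟩
  rw [infSupConst_eq_iInf_norm_starProjection_div_norm]
  set m := ⨅ v : {v : Q.range // v ≠ 0}, ‖W.starProjection v‖ / ‖((v : Q.range) : H)‖
  have hlow : ‖Q‖⁻¹ ≤ m := le_ciInf fun ⟨⟨v, hv⟩, hv0⟩ => by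
    have : 0 < ‖v‖ := by simpa using hv0
    rw [le_div_iff₀ this, inv_mul_eq_div, div_le_iff₀' hQ0]
    exact norm_le_opNorm_mul_norm_starProjection hQ hker hv
  have hm0 : 0 < m := (inv_pos.2 hQ0).trans_le hlow
  have hm (v : H) (hv : v ∈ Q.range) : m * ‖v‖ ≤ ‖W.starProjection v‖ := by
    rcases eq_or_ne v 0 with rfl | hv0
    · simp
    have hbdd : BddBelow (Set.range fun v : {v : Q.range // v ≠ 0} =>
        ‖W.starProjection v‖ / ‖((v : Q.range) : H)‖) :=
      ⟨0, by rintro _ ⟨v, rfl⟩; positivity⟩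
    rw [← le_div_iff₀ (norm_pos_iff.2 hv0)]
    exact ciInf_le hbdd ⟨⟨v, hv⟩, by simpa using hv0⟩
  have hup : ‖Q‖ ≤ m⁻¹ := Q.opNorm_le_bound (inv_nonneg.2 hm0.le) fun x => by
    rw [inv_mul_eq_div, le_div_iff₀' hm0]
    exact mul_norm_apply_le_norm hQ hker hm x
  exact le_antisymm ((le_inv_comm₀ hm0 hQ0).2 hup) hlow

theorem range_adjoint_eq_of_range_id_sub_eq [CompleteSpace H] (hQ : IsIdempotentElem Q)
    (hcoran : (ContinuousLinearMap.id ℝ H - Q).range = Wᗮ) : (Q†).range = W := by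
  have hQ' : IsIdempotentElem (Q†) := Q.star_eq_adjoint ▸ hQ.star
  rw [LinearMap.IsIdempotentElem.range_eq_ker (IsIdempotentElem.toLinearMap hQ'), ← coe_id,
    ← toLinearMap_sub, ← adjoint_id, ← map_sub, ← orthogonal_range, hcoran,
    Submodule.orthogonal_orthogonal]

end ObliqueProjection

theorem stmt2 {H : Type*} [NormedAddCommGroup H] [InnerProductSpace ℝ H] [CompleteSpace H]
    (V W : Submodule ℝ H) (hVc : IsClosed (V : Set H)) (hWc : IsClosed (W : Set H))
    (hV : V ≠ ⊥) (hW : W ≠ ⊥)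
    (Q : H →L[ℝ] H) (hQ : Q.comp Q = Q)
    (hQran : LinearMap.range (Q : H →ₗ[ℝ] H) = V)
    (hQcoran : LinearMap.range ((ContinuousLinearMap.id ℝ H - Q : H →L[ℝ] H) : H →ₗ[ℝ] H) = Wᗮ) :
    0 < infSupConst V W ∧ infSupConst V W = infSupConst W V ∧
      infSupConst V W = ‖Q‖⁻¹ := by
  have : CompleteSpace V := hVc.completeSpace_coe
  have : CompleteSpace W := hWc.completeSpace_coe
  have hQ : IsIdempotentElem Q := hQ
  have hVW : infSupConst V W = ‖Q‖⁻¹ :=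
    infSupConst_eq_inv_opNorm hQ hQran (ker_eq_of_range_id_sub_eq hQ hQcoran) hV
  have hWV : infSupConst W V = ‖Q†‖⁻¹ :=
    infSupConst_eq_inv_opNorm (Q.star_eq_adjoint ▸ hQ.star)
      (range_adjoint_eq_of_range_id_sub_eq hQ hQcoran)
      (by rw [← ContinuousLinearMap.orthogonal_range, hQran]) hW
  refine ⟨hVW ▸ inv_pos.2 (norm_pos_of_range_ne_bot (hQran ▸ hV)), ?_, hVW⟩
  rw [hWV, LinearIsometryEquiv.norm_map, hVW]
end

section
/- Let H be a real Hilbert space and V, Ṽ closed subspaces of H with V ≠ {0} and Ṽ ≠ {0}. Suppose both the inf-sup constant of the pair (V, Ṽ) and the inf-sup constant of the pair (Ṽ, V) are strictly positive. Then these two inf-sup constants are equal, say with common value β > 0, and there exists a bounded linear projector Q : H → H (Q∘Q = Q) with range Q = V, range(I − Q) = Ṽ^⊥, and ‖Q‖ = β^{-1}. -/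
open scoped RealInnerProductSpace

/-!
With `P_W` the orthogonal projection onto `W`, `sup_{w ∈ W} ⟪v, w⟫ / ‖w‖ = ‖P_W v‖`, so the
inf-sup constant of `(V, W)` is the minimum modulus of `T = P_W|_V : V → W`, and that of `(W, V)`
is the minimum modulus of `P_V|_W = T†`.
If both are positive, `T` is bounded below and `T†` is injective, so `T` is an isomorphism and both
constants equal `‖T⁻¹‖⁻¹ = ‖(T†)⁻¹‖⁻¹`. The projector is `Q = T⁻¹ ∘ P_W`, and `‖Q‖ = ‖T⁻¹‖`.
-/

open ContinuousLinearMap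
open scoped InnerProduct

noncomputable def minModulus {X Y : Type*} [Norm X] [Zero X] [Norm Y] (f : X → Y) : ℝ :=
  ⨅ x : {x : X // x ≠ 0}, ‖f x‖ / ‖(x : X)‖

section MinModulus

variable {X Y : Type*} [NormedAddCommGroup X] [NormedAddCommGroup Y]

theorem minModulus_mul_norm_le (f : X → Y) (x : X) : minModulus f * ‖x‖ ≤ ‖f x‖ := by
  rcases eq_or_ne x 0 with rfl | hx
  · simp
  have hbdd : BddBelow (Set.range fun x : {x : X // x ≠ 0} => ‖f x‖ / ‖(x : X)‖) :=
    ⟨0, by rintro _ ⟨x, rfl⟩; positivity⟩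
  rw [← le_div_iff₀ (norm_pos_iff.2 hx)]
  exact ciInf_le hbdd ⟨x, hx⟩

variable {𝕜 : Type*} [NontriviallyNormedField 𝕜] [NormedSpace 𝕜 X] [NormedSpace 𝕜 Y]

theorem antilipschitzWith_of_minModulus_pos {T : X →L[𝕜] Y} (hT : 0 < minModulus T) :
    AntilipschitzWith (minModulus T)⁻¹.toNNReal T :=
  T.antilipschitz_of_bound fun x => by
    rw [Real.coe_toNNReal _ (inv_nonneg.2 hT.le), ← div_eq_inv_mul, le_div_iff₀ hT, mul_comm]
    exact minModulus_mul_norm_le T x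

theorem ContinuousLinearEquiv.minModulus_eq (e : X ≃L[𝕜] Y) :
    minModulus e = ‖(e.symm : Y →L[𝕜] X)‖⁻¹ := by
  rcases subsingleton_or_nontrivial X with hX | hX
  · have : IsEmpty {x : X // x ≠ 0} := ⟨fun x => x.2 (Subsingleton.elim _ _)⟩
    simp [minModulus, Subsingleton.elim (e.symm : Y →L[𝕜] X) 0]
  have hsymm := e.norm_symm_pos
  obtain ⟨x₀, hx₀⟩ := exists_ne (0 : X)
  have : Nonempty {x : X // x ≠ 0} := ⟨⟨x₀, hx₀⟩⟩
  have hle : ‖(e.symm : Y →L[𝕜] X)‖⁻¹ ≤ minModulus e := le_ciInf fun x => by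
    rw [le_div_iff₀ (norm_pos_iff.2 x.2), inv_mul_le_iff₀ hsymm]
    simpa using (e.symm : Y →L[𝕜] X).le_opNorm (e x)
  have hpos : 0 < minModulus e := (inv_pos.2 hsymm).trans_le hle
  refine le_antisymm (le_inv_of_le_inv₀ hsymm <|
    opNorm_le_bound _ (inv_nonneg.2 hpos.le) fun y => ?_) hle
  rw [← div_eq_inv_mul, le_div_iff₀ hpos, mul_comm]
  simpa using minModulus_mul_norm_le e (e.symm y)

end MinModulus

section Adjoint

variable {𝕜 X Y : Type*} [RCLike 𝕜] [NormedAddCommGroup X] [NormedAddCommGroup Y]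
  [InnerProductSpace 𝕜 X] [InnerProductSpace 𝕜 Y] [CompleteSpace X] [CompleteSpace Y]

theorem ContinuousLinearEquiv.minModulus_adjoint (e : X ≃L[𝕜] Y) :
    minModulus ((e : X →L[𝕜] Y)†) = ‖(e.symm : Y →L[𝕜] X)‖⁻¹ := by
  let e' : Y ≃L[𝕜] X := .equivOfInverse ((e : X →L[𝕜] Y)†) ((e.symm : Y →L[𝕜] X)†)
    (fun y => by rw [← comp_apply, ← adjoint_comp, e.coe_comp_coe_symm, adjoint_id, id_apply])
    (fun x => by rw [← comp_apply, ← adjoint_comp, e.coe_symm_comp_coe, adjoint_id, id_apply])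
  calc minModulus ((e : X →L[𝕜] Y)†) = minModulus e' := rfl
    _ = ‖(e.symm : Y →L[𝕜] X)‖⁻¹ := by
      rw [e'.minModulus_eq]
      exact congrArg (·⁻¹) (adjoint.norm_map _)

theorem ContinuousLinearMap.range_eq_top_of_antilipschitz {K} {T : X →L[𝕜] Y}
    (hT : AntilipschitzWith K T) (hker : T†.ker = ⊥) : T.range = ⊤ := by
  have hclosed : IsClosed (T.range : Set Y) := hT.isClosed_range T.uniformContinuous
  have := hclosed.completeSpace_coe
  rw [← Submodule.orthogonal_eq_bot_iff, T.orthogonal_range, hker]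

end Adjoint

section Subspaces

variable {H : Type*} [NormedAddCommGroup H] [InnerProductSpace ℝ H]

noncomputable def orthogonalProjectionRestrict (V W : Submodule ℝ H)
    [W.HasOrthogonalProjection] : V →L[ℝ] W :=
  W.orthogonalProjectionOnto ∘L V.subtypeL

theorem iSup_inner_div_eq_norm_orthogonalProjectionOnto (W : Submodule ℝ H)
    [W.HasOrthogonalProjection] (x : H) :
    ⨆ w : {w : W // w ≠ 0}, ⟪x, ((w : W) : H)⟫ / (‖x‖ * ‖((w : W) : H)‖) =
      ‖W.orthogonalProjectionOnto x‖ / ‖x‖ := by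
  set p := W.orthogonalProjectionOnto x
  have hinner (w : W) : ⟪x, (w : H)⟫ = ⟪p, w⟫ :=
    (W.inner_orthogonalProjectionOnto_eq_of_mem_right w x).symm
  rcases eq_or_ne p 0 with hp | hp
  · simp [hinner, hp]
  have hbound (w : {w : W // w ≠ 0}) :
      ⟪x, ((w : W) : H)⟫ / (‖x‖ * ‖((w : W) : H)‖) ≤ ‖p‖ / ‖x‖ := by
    have hw : ‖(w : W)‖ ≠ 0 := norm_ne_zero_iff.2 w.2
    calc ⟪x, ((w : W) : H)⟫ / (‖x‖ * ‖((w : W) : H)‖)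
        ≤ ‖p‖ * ‖(w : W)‖ / (‖x‖ * ‖(w : W)‖) := by
          rw [hinner]
          exact div_le_div_of_nonneg_right (real_inner_le_norm p (w : W)) (by positivity)
      _ = ‖p‖ / ‖x‖ := mul_div_mul_right _ _ hw
  have : Nonempty {w : W // w ≠ 0} := ⟨⟨p, hp⟩⟩
  refine le_antisymm (ciSup_le hbound)
    (le_ciSup_of_le ⟨_, Set.forall_mem_range.2 hbound⟩ ⟨p, hp⟩ ?_)
  rw [hinner, real_inner_self_eq_norm_mul_norm, mul_comm ‖x‖]
  exact (mul_div_mul_left _ _ (norm_ne_zero_iff.2 hp)).ge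

theorem infSupConst_eq_minModulus (V W : Submodule ℝ H) [W.HasOrthogonalProjection] :
    infSupConst V W = minModulus (orthogonalProjectionRestrict V W) :=
  iInf_congr fun v => iSup_inner_div_eq_norm_orthogonalProjectionOnto W v

theorem adjoint_orthogonalProjectionRestrict (V W : Submodule ℝ H) [CompleteSpace V]
    [CompleteSpace W] :
    (orthogonalProjectionRestrict V W)† = orthogonalProjectionRestrict W V := by
  refine ((eq_adjoint_iff _ _).2 fun w v => ?_).symm
  simp [orthogonalProjectionRestrict]

end Subspaces

section ObliqueProjection

variable {H : Type*} [NormedAddCommGroup H] [InnerProductSpace ℝ H]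
  {V W : Submodule ℝ H} [W.HasOrthogonalProjection]

noncomputable def obliqueProjection (E : V ≃L[ℝ] W) : H →L[ℝ] H :=
  V.subtypeL ∘L (E.symm : W →L[ℝ] V) ∘L W.orthogonalProjectionOnto

theorem obliqueProjection_apply_mem (E : V ≃L[ℝ] W) (x : H) : obliqueProjection E x ∈ V :=
  (E.symm (W.orthogonalProjectionOnto x)).2

theorem norm_obliqueProjection (E : V ≃L[ℝ] W) :
    ‖obliqueProjection E‖ = ‖(E.symm : W →L[ℝ] V)‖ := by
  refine le_antisymm ?_ (opNorm_le_bound _ (norm_nonneg _) fun w => ?_)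
  · calc ‖obliqueProjection E‖
        ≤ ‖V.subtypeL‖ * (‖(E.symm : W →L[ℝ] V)‖ * ‖W.orthogonalProjectionOnto‖) :=
          (opNorm_comp_le _ _).trans (by gcongr; exact opNorm_comp_le _ _)
      _ ≤ 1 * (‖(E.symm : W →L[ℝ] V)‖ * 1) := by
          gcongr
          exacts [V.norm_subtypeL_le, W.orthogonalProjectionOnto_norm_le]
      _ = ‖(E.symm : W →L[ℝ] V)‖ := by ring
  · have : obliqueProjection E w = E.symm w := by simp [obliqueProjection]
    calc ‖(E.symm : W →L[ℝ] V) w‖ = ‖obliqueProjection E w‖ := by rw [this]; rfl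
      _ ≤ ‖obliqueProjection E‖ * ‖w‖ := le_opNorm _ _

variable {E : V ≃L[ℝ] W}

theorem obliqueProjection_apply_of_mem (hE : ∀ v, E v = orthogonalProjectionRestrict V W v)
    {v : H} (hv : v ∈ V) : obliqueProjection E v = v := by
  have : W.orthogonalProjectionOnto v = E ⟨v, hv⟩ := (hE ⟨v, hv⟩).symm
  simp [obliqueProjection, this]

theorem orthogonalProjectionOnto_obliqueProjection
    (hE : ∀ v, E v = orthogonalProjectionRestrict V W v) (x : H) :
    W.orthogonalProjectionOnto (obliqueProjection E x) = W.orthogonalProjectionOnto x := by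
  rw [← E.apply_symm_apply (W.orthogonalProjectionOnto x), hE]
  rfl

theorem obliqueProjection_comp_self (hE : ∀ v, E v = orthogonalProjectionRestrict V W v) :
    (obliqueProjection E).comp (obliqueProjection E) = obliqueProjection E :=
  ext fun x => obliqueProjection_apply_of_mem hE (obliqueProjection_apply_mem E x)

theorem range_obliqueProjection (hE : ∀ v, E v = orthogonalProjectionRestrict V W v) :
    LinearMap.range (obliqueProjection E : H →ₗ[ℝ] H) = V := by
  refine le_antisymm ?_ fun v hv => ⟨v, obliqueProjection_apply_of_mem hE hv⟩
  rintro _ ⟨x, rfl⟩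
  exact obliqueProjection_apply_mem E x

theorem range_id_sub_obliqueProjection (hE : ∀ v, E v = orthogonalProjectionRestrict V W v) :
    LinearMap.range ((ContinuousLinearMap.id ℝ H - obliqueProjection E : H →L[ℝ] H) :
      H →ₗ[ℝ] H) = Wᗮ := by
  refine le_antisymm ?_ fun x hx => ⟨x, ?_⟩
  · rintro _ ⟨x, rfl⟩
    simp [← W.orthogonalProjectionOnto_eq_zero_iff, orthogonalProjectionOnto_obliqueProjection hE]
  · have : obliqueProjection E x = 0 := by
      simp [obliqueProjection, W.orthogonalProjectionOnto_eq_zero_iff.2 hx]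
    simp [this]

end ObliqueProjection

theorem stmt3_general {H : Type*} [NormedAddCommGroup H] [InnerProductSpace ℝ H] [CompleteSpace H]
    (V W : Submodule ℝ H) (hVc : IsClosed (V : Set H)) (hWc : IsClosed (W : Set H))
    (h1 : 0 < infSupConst V W) (h2 : 0 < infSupConst W V) :
    infSupConst V W = infSupConst W V ∧
      ∃ Q : H →L[ℝ] H, Q.comp Q = Q ∧ LinearMap.range (Q : H →ₗ[ℝ] H) = V ∧
        LinearMap.range ((ContinuousLinearMap.id ℝ H - Q : H →L[ℝ] H) : H →ₗ[ℝ] H) = Wᗮ ∧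
        ‖Q‖ = (infSupConst V W)⁻¹ := by
  have := hVc.completeSpace_coe
  have := hWc.completeSpace_coe
  rw [infSupConst_eq_minModulus] at h1 h2
  have hVW := antilipschitzWith_of_minModulus_pos h1
  have hWV := antilipschitzWith_of_minModulus_pos h2
  let E : V ≃L[ℝ] W := .ofBijective (orthogonalProjectionRestrict V W)
    (LinearMap.ker_eq_bot.2 hVW.injective)
    (range_eq_top_of_antilipschitz hVW <| by
      rw [adjoint_orthogonalProjectionRestrict]
      exact LinearMap.ker_eq_bot.2 hWV.injective)
  have hE (v : V) : E v = orthogonalProjectionRestrict V W v := rfl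
  have hβ : infSupConst V W = ‖(E.symm : W →L[ℝ] V)‖⁻¹ := by
    rw [infSupConst_eq_minModulus, ← E.minModulus_eq]
    rfl
  have hβ' : infSupConst W V = ‖(E.symm : W →L[ℝ] V)‖⁻¹ := by
    rw [infSupConst_eq_minModulus, ← adjoint_orthogonalProjectionRestrict, ← E.minModulus_adjoint]
    rfl
  exact ⟨hβ.trans hβ'.symm, obliqueProjection E, obliqueProjection_comp_self hE,
    range_obliqueProjection hE, range_id_sub_obliqueProjection hE,
    by rw [norm_obliqueProjection, hβ, inv_inv]⟩

theorem stmt3 {H : Type*} [NormedAddCommGroup H] [InnerProductSpace ℝ H] [CompleteSpace H]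
    (V W : Submodule ℝ H) (hVc : IsClosed (V : Set H)) (hWc : IsClosed (W : Set H))
    (hV : V ≠ ⊥) (hW : W ≠ ⊥)
    (h1 : 0 < infSupConst V W) (h2 : 0 < infSupConst W V) :
    infSupConst V W = infSupConst W V ∧
      ∃ Q : H →L[ℝ] H, Q.comp Q = Q ∧ LinearMap.range (Q : H →ₗ[ℝ] H) = V ∧
        LinearMap.range ((ContinuousLinearMap.id ℝ H - Q : H →L[ℝ] H) : H →ₗ[ℝ] H) = Wᗮ ∧
        ‖Q‖ = (infSupConst V W)⁻¹ :=
  stmt3_general V W hVc hWc h1 h2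
end

section
/- Let H be a real Hilbert space and V, Ṽ closed subspaces of H admitting a bounded linear projector Q : H → H with Q∘Q = Q, range Q = V and range(I − Q) = Ṽ^⊥. Then for every Riesz basis Φ = (φ_i)_{i∈I} for V there exists a unique family Φ̃ = (φ̃_i)_{i∈I} of elements of Ṽ with ⟨φ_i, φ̃_{i'}⟩_H = δ_{i i'} for all i, i' ∈ I, and this family Φ̃ is a Riesz basis for Ṽ. -/
open scoped RealInnerProductSpace

/-- `φ` is a Riesz basis for the closed subspace `U` with Riesz constants `A ≤ B`:
the closed linear span of `φ` is `U` and
`A·Σᵢ cᵢ² ≤ ‖Σᵢ cᵢ φᵢ‖² ≤ B·Σᵢ cᵢ²` for every finitely supported family `c`. -/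
def IsRieszBasisWith {H : Type*} [NormedAddCommGroup H] [InnerProductSpace ℝ H]
    {ι : Type*} (φ : ι → H) (U : Submodule ℝ H) (A B : ℝ) : Prop :=
  (Submodule.span ℝ (Set.range φ)).topologicalClosure = U ∧
    ∀ c : ι →₀ ℝ,
      A * ∑ i ∈ c.support, c i ^ 2 ≤ ‖∑ i ∈ c.support, c i • φ i‖ ^ 2 ∧
      ‖∑ i ∈ c.support, c i • φ i‖ ^ 2 ≤ B * ∑ i ∈ c.support, c i ^ 2

/-- `φ` is a Riesz basis for the closed subspace `U`. -/
def IsRieszBasis {H : Type*} [NormedAddCommGroup H] [InnerProductSpace ℝ H]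
    {ι : Type*} (φ : ι → H) (U : Submodule ℝ H) : Prop :=
  ∃ A B : ℝ, 0 < A ∧ A ≤ B ∧ IsRieszBasisWith φ U A B

/-!
Pairing with a combination of the `φⱼ` reads off coefficients, `⟪∑ aⱼ φⱼ, x⟫ = ∑ aⱼ ⟪φⱼ, x⟫`,
so Riesz bounds of `φ` control every `x` whose coefficients `⟪φⱼ, x⟫` are known.
The lower bound keeps `φᵢ` at distance `√A` from the span of the other `φⱼ`, so `φ` has a
biorthogonal family `χ` in `H`; then `Q† χ` is one inside `W`, because `Q` fixes `V`.
Since `⟪Q v, w⟫ = ⟪v, w⟫` for `w ∈ W`, we get `‖w‖² = ⟪Q w, w⟫` with `Q w ∈ V`, and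
Cauchy–Schwarz on coefficients bounds this by `‖Q‖² A⁻¹ ∑ cᵢ²` when `⟪φᵢ, w⟫ = cᵢ`: this is
the upper Riesz bound of a dual family in `W`, and for `c = 0` it gives uniqueness. The lower
bound `B⁻¹` comes from pairing `∑ cᵢ ψᵢ` with `∑ cᵢ φᵢ`. Finally, if `w ∈ W` is orthogonal
to all `ψᵢ`, so is `Q w ∈ V`; with `B'` the upper bound just obtained, every `y` in the span
of `φ` satisfies `‖y‖² ≤ B B' ‖y - Q w‖²`, and letting `y → Q w` gives `Q w = 0`, hence `w = 0`.
-/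

section DualRieszBasis

open Submodule Set

lemma Submodule.topologicalClosure_subset_of_isClosed {R M : Type*} [Semiring R]
    [TopologicalSpace M] [AddCommMonoid M] [Module R M] [ContinuousAdd M]
    [ContinuousConstSMul R M] {K : Submodule R M} {s : Set M} (hK : (K : Set M) ⊆ s)
    (hs : IsClosed s) : (K.topologicalClosure : Set M) ⊆ s := by
  rw [topologicalClosure_coe]
  exact closure_minimal hK hs

lemma Finsupp.sum_sq_le_sum_support_sq {ι : Type*} (c : ι →₀ ℝ) (s : Finset ι) :
    ∑ i ∈ s, c i ^ 2 ≤ ∑ i ∈ c.support, c i ^ 2 := by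
  classical
  calc ∑ i ∈ s, c i ^ 2 ≤ ∑ i ∈ s ∪ c.support, c i ^ 2 :=
        Finset.sum_le_sum_of_subset_of_nonneg Finset.subset_union_left fun _ _ _ => sq_nonneg _
    _ = ∑ i ∈ c.support, c i ^ 2 := by
        refine (Finset.sum_subset Finset.subset_union_right fun i _ hi => ?_).symm
        rw [Finsupp.notMem_support_iff.1 hi, sq, zero_mul]

lemma Submodule.topologicalClosure_eq_of_le_of_orthogonal {𝕜 E : Type*} [RCLike 𝕜]
    [NormedAddCommGroup E] [InnerProductSpace 𝕜 E] [CompleteSpace E] {K W : Submodule 𝕜 E}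
    (hW : IsClosed (W : Set E)) (hKW : K ≤ W) (h : ∀ w ∈ W, w ∈ Kᗮ → w = 0) :
    K.topologicalClosure = W := by
  have hinf : K.topologicalClosureᗮ ⊓ W = ⊥ := by
    rw [orthogonal_closure, eq_bot_iff]
    exact fun w hw => (mem_bot 𝕜).2 (h w hw.2 hw.1)
  have := sup_orthogonal_inf_of_hasOrthogonalProjection (topologicalClosure_minimal K hKW hW)
  rwa [hinf, sup_bot_eq] at this

section Projector

variable {𝕜 E : Type*} [RCLike 𝕜] [NormedAddCommGroup E] [InnerProductSpace 𝕜 E]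
  {Q : E →L[𝕜] E} {W : Submodule 𝕜 E}

open scoped InnerProductSpace

lemma ContinuousLinearMap.inner_apply_eq_of_range_id_sub_eq
    (hQW : LinearMap.range ((ContinuousLinearMap.id 𝕜 E - Q : E →L[𝕜] E) : E →ₗ[𝕜] E) = Wᗮ)
    (v : E) {w : E} (hw : w ∈ W) : ⟪Q v, w⟫_𝕜 = ⟪v, w⟫_𝕜 := by
  have hv : v - Q v ∈ Wᗮ := hQW ▸ ⟨v, rfl⟩
  have h0 := (mem_orthogonal' W _).1 hv w hw
  rwa [inner_sub_left, sub_eq_zero, eq_comm] at h0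

lemma ContinuousLinearMap.adjoint_apply_mem_of_range_id_sub_eq [CompleteSpace E]
    (hW : IsClosed (W : Set E)) (hQ : Q.comp Q = Q)
    (hQW : LinearMap.range ((ContinuousLinearMap.id 𝕜 E - Q : E →L[𝕜] E) : E →ₗ[𝕜] E) = Wᗮ)
    (x : E) : Q.adjoint x ∈ W := by
  have : CompleteSpace W := hW.completeSpace_coe
  rw [← orthogonal_orthogonal W, mem_orthogonal]
  intro y hy
  obtain ⟨u, rfl⟩ : y ∈ LinearMap.range _ := hQW ▸ hy
  have hQQ : Q (Q u) = Q u := DFunLike.congr_fun hQ u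
  simp [ContinuousLinearMap.adjoint_inner_right, hQQ]

end Projector

variable {H : Type*} [NormedAddCommGroup H] [InnerProductSpace ℝ H] {ι : Type*}

def HasLowerRieszBound (φ : ι → H) (A : ℝ) : Prop :=
  ∀ c : ι →₀ ℝ, A * ∑ i ∈ c.support, c i ^ 2 ≤ ‖∑ i ∈ c.support, c i • φ i‖ ^ 2

def HasUpperRieszBound (φ : ι → H) (B : ℝ) : Prop :=
  ∀ c : ι →₀ ℝ, ‖∑ i ∈ c.support, c i • φ i‖ ^ 2 ≤ B * ∑ i ∈ c.support, c i ^ 2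

def IsBiorthogonal [DecidableEq ι] (φ ψ : ι → H) : Prop :=
  ∀ i i', ⟪φ i, ψ i'⟫ = if i = i' then (1 : ℝ) else 0

section RieszBounds

variable {φ ψ : ι → H}

lemma IsRieszBasisWith.hasLowerRieszBound {U : Submodule ℝ H} {A B : ℝ}
    (h : IsRieszBasisWith φ U A B) : HasLowerRieszBound φ A :=
  fun c => (h.2 c).1

lemma IsRieszBasisWith.hasUpperRieszBound {U : Submodule ℝ H} {A B : ℝ}
    (h : IsRieszBasisWith φ U A B) : HasUpperRieszBound φ B :=
  fun c => (h.2 c).2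

lemma IsBiorthogonal.inner_sum_smul [DecidableEq ι] (hψ : IsBiorthogonal φ ψ) (c : ι →₀ ℝ)
    (i : ι) : ⟪φ i, ∑ j ∈ c.support, c j • ψ j⟫ = c i := by
  simp [inner_sum, real_inner_smul_right, hψ i, eq_comm]

lemma IsBiorthogonal.sum_smul_inner [DecidableEq ι] (hψ : IsBiorthogonal φ ψ) (c : ι →₀ ℝ)
    (i : ι) : ⟪∑ j ∈ c.support, c j • φ j, ψ i⟫ = c i := by
  simp [sum_inner, real_inner_smul_left, hψ _ i, eq_comm]

lemma HasUpperRieszBound.sum_sq_le {B : ℝ} (hψ : HasUpperRieszBound ψ B) (hB : 0 ≤ B)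
    {x : H} {c : ι →₀ ℝ} (hx : ∀ i ∈ c.support, ⟪x, ψ i⟫ = c i) :
    ∑ i ∈ c.support, c i ^ 2 ≤ B * ‖x‖ ^ 2 := by
  set S := ∑ i ∈ c.support, c i ^ 2
  set y := ∑ i ∈ c.support, c i • ψ i
  have hSy : S = ⟪x, y⟫ := by
    rw [inner_sum]
    exact Finset.sum_congr rfl fun i hi => by rw [real_inner_smul_right, hx i hi, sq]
  have hS : S * S ≤ S * (B * ‖x‖ ^ 2) :=
    calc S * S = ⟪x, y⟫ * ⟪x, y⟫ := by rw [hSy]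
      _ ≤ ‖x‖ ^ 2 * ‖y‖ ^ 2 := by
        simpa only [real_inner_self_eq_norm_sq] using real_inner_mul_inner_self_le x y
      _ ≤ ‖x‖ ^ 2 * (B * S) := by gcongr; exact hψ c
      _ = S * (B * ‖x‖ ^ 2) := by ring
  have hS0 : 0 ≤ S := Finset.sum_nonneg fun i _ => sq_nonneg (c i)
  clear_value S
  rcases hS0.eq_or_lt with hS0 | hS0
  · rw [← hS0]; positivity
  · exact le_of_mul_le_mul_left hS hS0

lemma HasLowerRieszBound.notMem_topologicalClosure_span_image_ne {A : ℝ}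
    (hφ : HasLowerRieszBound φ A) (hA : 0 < A) (i : ι) :
    φ i ∉ (span ℝ (φ '' {j | j ≠ i})).topologicalClosure := by
  classical
  have hsep : (span ℝ (φ '' {j | j ≠ i}) : Set H) ⊆ {y | A ≤ ‖φ i - y‖ ^ 2} := by
    intro y hy
    obtain ⟨l, hl, rfl⟩ := (Finsupp.mem_span_image_iff_linearCombination ℝ).1 hy
    have hli : l i = 0 :=
      Finsupp.notMem_support_iff.1 fun h => (Finsupp.mem_supported ℝ l).1 hl h rfl
    set d := Finsupp.single i (1 : ℝ) - l
    have hd : φ i - Finsupp.linearCombination ℝ φ l = ∑ j ∈ d.support, d j • φ j := by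
      show _ = Finsupp.linearCombination ℝ φ d
      rw [map_sub, Finsupp.linearCombination_single, one_smul]
    have hdi : d i = 1 := by simp [d, hli]
    have hd1 : 1 ≤ ∑ j ∈ d.support, d j ^ 2 := by
      have := Finset.single_le_sum (f := fun j => d j ^ 2) (fun j _ => sq_nonneg (d j))
        (Finsupp.mem_support_iff.2 (by rw [hdi]; exact one_ne_zero))
      rwa [hdi, one_pow] at this
    calc A ≤ A * ∑ j ∈ d.support, d j ^ 2 := le_mul_of_one_le_right hA.le hd1
      _ ≤ ‖φ i - Finsupp.linearCombination ℝ φ l‖ ^ 2 := hd ▸ hφ d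
  intro hi
  have hA0 : A ≤ ‖φ i - φ i‖ ^ 2 :=
    topologicalClosure_subset_of_isClosed hsep (isClosed_le continuous_const (by fun_prop)) hi
  rw [sub_self, norm_zero] at hA0
  linarith

lemma HasLowerRieszBound.exists_isBiorthogonal [CompleteSpace H] [DecidableEq ι] {A : ℝ}
    (hφ : HasLowerRieszBound φ A) (hA : 0 < A) : ∃ χ : ι → H, IsBiorthogonal φ χ := by
  have hdual : ∀ i, ∃ p ∈ (span ℝ (φ '' {j | j ≠ i}))ᗮ, ⟪φ i, p⟫ = 1 := by
    intro i
    have hi := hφ.notMem_topologicalClosure_span_image_ne hA i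
    rw [← orthogonal_orthogonal_eq_closure, mem_orthogonal] at hi
    push Not at hi
    obtain ⟨p, hp, hpi⟩ := hi
    rw [real_inner_comm] at hpi
    refine ⟨⟪φ i, p⟫⁻¹ • p, smul_mem _ _ hp, ?_⟩
    rw [real_inner_smul_right, inv_mul_cancel₀ hpi]
  choose χ hχ hχi using hdual
  refine ⟨χ, fun j i => ?_⟩
  split_ifs with hji
  · exact hji ▸ hχi j
  · exact (mem_orthogonal _ _).1 (hχ i) _ (subset_span ⟨j, hji, rfl⟩)

lemma HasLowerRieszBound.inner_sq_le {A : ℝ} (hφ : HasLowerRieszBound φ A) (hA : 0 < A)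
    {x : H} {c : ι →₀ ℝ} (hx : ∀ i, ⟪φ i, x⟫ = c i) {y : H}
    (hy : y ∈ (span ℝ (range φ)).topologicalClosure) :
    ⟪y, x⟫ ^ 2 ≤ A⁻¹ * (∑ i ∈ c.support, c i ^ 2) * ‖y‖ ^ 2 := by
  set S := ∑ i ∈ c.support, c i ^ 2
  have key : (span ℝ (range φ) : Set H) ⊆ {y | ⟪y, x⟫ ^ 2 ≤ A⁻¹ * S * ‖y‖ ^ 2} := by
    intro y hy
    obtain ⟨a, rfl⟩ := Finsupp.mem_span_range_iff_exists_finsupp.1 hy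
    have ha : ∑ i ∈ a.support, a i ^ 2 ≤ A⁻¹ * ‖∑ i ∈ a.support, a i • φ i‖ ^ 2 :=
      (le_inv_mul_iff₀ hA).2 (hφ a)
    calc ⟪∑ i ∈ a.support, a i • φ i, x⟫ ^ 2 = (∑ i ∈ a.support, a i * c i) ^ 2 := by
          simp only [sum_inner, real_inner_smul_left, hx]
      _ ≤ (∑ i ∈ a.support, a i ^ 2) * ∑ i ∈ a.support, c i ^ 2 :=
          Finset.sum_mul_sq_le_sq_mul_sq _ _ _
      _ ≤ (A⁻¹ * ‖∑ i ∈ a.support, a i • φ i‖ ^ 2) * S := by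
          gcongr
          exact c.sum_sq_le_sum_support_sq _
      _ = A⁻¹ * S * ‖∑ i ∈ a.support, a i • φ i‖ ^ 2 := by ring
  exact topologicalClosure_subset_of_isClosed key (isClosed_le (by fun_prop) (by fun_prop)) hy

lemma HasLowerRieszBound.norm_sq_le_of_mem {A : ℝ} (hφ : HasLowerRieszBound φ A) (hA : 0 < A)
    {Q : H →L[ℝ] H} {W : Submodule ℝ H}
    (hQV : ∀ v, Q v ∈ (span ℝ (range φ)).topologicalClosure)
    (hQW : ∀ v, ∀ w ∈ W, ⟪Q v, w⟫ = ⟪v, w⟫)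
    {x : H} (hxW : x ∈ W) {c : ι →₀ ℝ} (hx : ∀ i, ⟪φ i, x⟫ = c i) :
    ‖x‖ ^ 2 ≤ ‖Q‖ ^ 2 * A⁻¹ * ∑ i ∈ c.support, c i ^ 2 := by
  set K := A⁻¹ * ∑ i ∈ c.support, c i ^ 2
  have hK : 0 ≤ K := mul_nonneg (inv_nonneg.2 hA.le) (Finset.sum_nonneg fun i _ => sq_nonneg _)
  have hQx : ‖Q x‖ ^ 2 ≤ ‖Q‖ ^ 2 * ‖x‖ ^ 2 := by
    rw [← mul_pow]; gcongr; exact Q.le_opNorm x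
  have key : ‖x‖ ^ 2 * ‖x‖ ^ 2 ≤ ‖x‖ ^ 2 * (‖Q‖ ^ 2 * K) :=
    calc ‖x‖ ^ 2 * ‖x‖ ^ 2 = ⟪Q x, x⟫ ^ 2 := by
          rw [hQW x x hxW, real_inner_self_eq_norm_sq]; ring
      _ ≤ K * ‖Q x‖ ^ 2 := hφ.inner_sq_le hA hx (hQV x)
      _ ≤ K * (‖Q‖ ^ 2 * ‖x‖ ^ 2) := by gcongr
      _ = ‖x‖ ^ 2 * (‖Q‖ ^ 2 * K) := by ring
  rw [mul_assoc]
  rcases (sq_nonneg ‖x‖).eq_or_lt with hx0 | hx0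
  · rw [← hx0]; exact mul_nonneg (sq_nonneg _) hK
  · exact le_of_mul_le_mul_left key hx0

lemma IsBiorthogonal.eq_zero_of_forall_inner_eq_zero [DecidableEq ι] {B B' : ℝ}
    (hφψ : IsBiorthogonal φ ψ) (hφ : HasUpperRieszBound φ B) (hψ : HasUpperRieszBound ψ B')
    (hB : 0 ≤ B) (hB' : 0 ≤ B') {v : H} (hv : v ∈ (span ℝ (range φ)).topologicalClosure)
    (hvψ : ∀ i, ⟪v, ψ i⟫ = 0) : v = 0 := by
  have key : (span ℝ (range φ) : Set H) ⊆ {y | ‖y‖ ^ 2 ≤ B * B' * ‖y - v‖ ^ 2} := by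
    intro y hy
    obtain ⟨a, rfl⟩ := Finsupp.mem_span_range_iff_exists_finsupp.1 hy
    have ha : ∑ i ∈ a.support, a i ^ 2 ≤ B' * ‖∑ i ∈ a.support, a i • φ i - v‖ ^ 2 :=
      hψ.sum_sq_le hB' fun i _ => by
        rw [inner_sub_left, hvψ, sub_zero, hφψ.sum_smul_inner]
    calc ‖∑ i ∈ a.support, a i • φ i‖ ^ 2 ≤ B * ∑ i ∈ a.support, a i ^ 2 := hφ a
      _ ≤ B * (B' * ‖∑ i ∈ a.support, a i • φ i - v‖ ^ 2) := by gcongr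
      _ = _ := (mul_assoc _ _ _).symm
  have hv2 : ‖v‖ ^ 2 ≤ B * B' * ‖v - v‖ ^ 2 :=
    topologicalClosure_subset_of_isClosed key (isClosed_le (by fun_prop) (by fun_prop)) hv
  rw [sub_self, norm_zero] at hv2
  simpa using hv2

end RieszBounds

namespace IsBiorthogonal

variable [DecidableEq ι] {φ ψ : ι → H} {W : Submodule ℝ H} {Q : H →L[ℝ] H} {A : ℝ}

lemma eq_of_forall_mem {ψ' : ι → H} (hψ : IsBiorthogonal φ ψ) (hψ' : IsBiorthogonal φ ψ')
    (hψW : ∀ i, ψ i ∈ W) (hψ'W : ∀ i, ψ' i ∈ W) (hφ : HasLowerRieszBound φ A) (hA : 0 < A)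
    (hQV : ∀ v, Q v ∈ (span ℝ (range φ)).topologicalClosure)
    (hQW : ∀ v, ∀ w ∈ W, ⟪Q v, w⟫ = ⟪v, w⟫) : ψ = ψ' := by
  funext i
  have hd : ‖ψ i - ψ' i‖ ^ 2 ≤ ‖Q‖ ^ 2 * A⁻¹ * ∑ j ∈ (0 : ι →₀ ℝ).support, (0 : ι →₀ ℝ) j ^ 2 :=
    hφ.norm_sq_le_of_mem hA hQV hQW (W.sub_mem (hψW i) (hψ'W i)) fun j => by
      rw [inner_sub_right, hψ, hψ', sub_self, Finsupp.coe_zero, Pi.zero_apply]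
  rw [Finsupp.support_zero, Finset.sum_empty, mul_zero] at hd
  exact sub_eq_zero.1 (norm_eq_zero.1 (pow_eq_zero_iff two_ne_zero |>.1
    (le_antisymm hd (sq_nonneg _))))

lemma isRieszBasisWith [CompleteSpace H] {V : Submodule ℝ H} {B : ℝ}
    (hψ : IsBiorthogonal φ ψ) (hψW : ∀ i, ψ i ∈ W) (hφ : IsRieszBasisWith φ V A B) (hA : 0 < A)
    (hB : 0 < B) (hW : IsClosed (W : Set H)) (hQV : ∀ v, Q v ∈ V)
    (hQW : ∀ v, ∀ w ∈ W, ⟪Q v, w⟫ = ⟪v, w⟫) :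
    IsRieszBasisWith ψ W B⁻¹ (max B⁻¹ (‖Q‖ ^ 2 * A⁻¹)) := by
  have hspan := hφ.1
  subst hspan
  have hup : HasUpperRieszBound ψ (‖Q‖ ^ 2 * A⁻¹) := fun c =>
    hφ.hasLowerRieszBound.norm_sq_le_of_mem hA hQV hQW
      (W.sum_mem fun i _ => W.smul_mem _ (hψW i)) (hψ.inner_sum_smul c)
  refine ⟨topologicalClosure_eq_of_le_of_orthogonal hW (span_le.2 (range_subset_iff.2 hψW))
    fun w hw hwψ => ?_, fun c => ⟨?_, ?_⟩⟩
  · have hQw : Q w = 0 := hψ.eq_zero_of_forall_inner_eq_zero hφ.hasUpperRieszBound hup hB.le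
      (by positivity) (hQV w) fun i => by
        rw [hQW w _ (hψW i), real_inner_comm]
        exact (mem_orthogonal _ _).1 hwψ _ (subset_span (mem_range_self i))
    rw [← norm_eq_zero, ← sq_eq_zero_iff, ← real_inner_self_eq_norm_sq, ← hQW w w hw, hQw,
      inner_zero_left]
  · refine (inv_mul_le_iff₀ hB).2 (hφ.hasUpperRieszBound.sum_sq_le hB.le fun i _ => ?_)
    rw [real_inner_comm, hψ.inner_sum_smul]
  · exact (hup c).trans (mul_le_mul_of_nonneg_right (le_max_right _ _)
      (Finset.sum_nonneg fun i _ => sq_nonneg _))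

end IsBiorthogonal

end DualRieszBasis

theorem stmt4_general {H : Type*} [NormedAddCommGroup H] [InnerProductSpace ℝ H] [CompleteSpace H]
    {I : Type*} [DecidableEq I]
    (V W : Submodule ℝ H) (hWc : IsClosed (W : Set H))
    (Q : H →L[ℝ] H) (hQ : Q.comp Q = Q)
    (hQran : LinearMap.range (Q : H →ₗ[ℝ] H) = V)
    (hQcoran : LinearMap.range ((ContinuousLinearMap.id ℝ H - Q : H →L[ℝ] H) : H →ₗ[ℝ] H) = Wᗮ)
    (φ : I → H) (hφ : IsRieszBasis φ V) :
    (∃! ψ : I → H, (∀ i, ψ i ∈ W) ∧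
        ∀ i i' : I, ⟪φ i, ψ i'⟫ = if i = i' then (1 : ℝ) else 0) ∧
    ∀ ψ : I → H, ((∀ i, ψ i ∈ W) ∧
        ∀ i i' : I, ⟪φ i, ψ i'⟫ = if i = i' then (1 : ℝ) else 0) →
      IsRieszBasis ψ W := by
  obtain ⟨A, B, hA, hAB, hφ⟩ := hφ
  have hQV : ∀ v, Q v ∈ V := fun v => hQran ▸ LinearMap.mem_range_self _ v
  have hQW := fun v w (hw : w ∈ W) => Q.inner_apply_eq_of_range_id_sub_eq hQcoran v hw
  have hQadj := Q.adjoint_apply_mem_of_range_id_sub_eq hWc hQ hQcoran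
  have hQφ : ∀ i, Q (φ i) = φ i := by
    intro i
    obtain ⟨u, hu⟩ : φ i ∈ LinearMap.range (Q : H →ₗ[ℝ] H) :=
      hQran ▸ hφ.1 ▸
        Submodule.le_topologicalClosure _ (Submodule.subset_span (Set.mem_range_self i))
    rw [← hu]
    exact DFunLike.congr_fun hQ u
  obtain ⟨χ, hχ⟩ := hφ.hasLowerRieszBound.exists_isBiorthogonal hA
  have hψ₀ : IsBiorthogonal φ fun i => Q.adjoint (χ i) := fun i i' => by
    rw [ContinuousLinearMap.adjoint_inner_right, hQφ, hχ]
  refine ⟨⟨_, ⟨fun i => hQadj _, hψ₀⟩, fun ψ ⟨hψW, hψ⟩ =>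
    IsBiorthogonal.eq_of_forall_mem hψ hψ₀ hψW (fun i => hQadj _) hφ.hasLowerRieszBound hA
      (hφ.1 ▸ hQV) hQW⟩, fun ψ ⟨hψW, hψ⟩ => ⟨_, _, inv_pos.2 (hA.trans_le hAB), le_max_left _ _,
    IsBiorthogonal.isRieszBasisWith hψ hψW hφ hA (hA.trans_le hAB) hWc hQV hQW⟩⟩

theorem stmt4 {H : Type*} [NormedAddCommGroup H] [InnerProductSpace ℝ H] [CompleteSpace H]
    {I : Type*} [Countable I] [DecidableEq I]
    (V W : Submodule ℝ H) (hVc : IsClosed (V : Set H)) (hWc : IsClosed (W : Set H))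
    (Q : H →L[ℝ] H) (hQ : Q.comp Q = Q)
    (hQran : LinearMap.range (Q : H →ₗ[ℝ] H) = V)
    (hQcoran : LinearMap.range ((ContinuousLinearMap.id ℝ H - Q : H →L[ℝ] H) : H →ₗ[ℝ] H) = Wᗮ)
    (φ : I → H) (hφ : IsRieszBasis φ V) :
    (∃! ψ : I → H, (∀ i, ψ i ∈ W) ∧
        ∀ i i' : I, ⟪φ i, ψ i'⟫ = if i = i' then (1 : ℝ) else 0) ∧
    ∀ ψ : I → H, ((∀ i, ψ i ∈ W) ∧
        ∀ i i' : I, ⟪φ i, ψ i'⟫ = if i = i' then (1 : ℝ) else 0) →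
      IsRieszBasis ψ W :=
  stmt4_general V W hWc Q hQ hQran hQcoran φ hφ
end

section
/- Let H be a real Hilbert space, I a countable index set, and let Φ = (φ_i)_{i∈I} and Φ̃ = (φ̃_i)_{i∈I} be Riesz bases for closed subspaces V and Ṽ of H, respectively. Suppose the bounded operator ⟨Φ, Φ̃⟩_H on ℓ²(I) is boundedly invertible. Then the inf-sup constant β of the pair (V, Ṽ) satisfies β ≥ ‖⟨Φ,Φ̃⟩_H^{-1}‖^{-1} / √( ‖⟨Φ,Φ⟩_H‖ · ‖⟨Φ̃,Φ̃⟩_H‖ ), and the same lower bound holds for the inf-sup constant of the pair (Ṽ, V). -/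
open scoped RealInnerProductSpace

/-- `Op` is the bounded operator `ℓ²(I) → ℓ²(I)` with matrix `[⟨φ i, ψ k⟩]_{i,k}`. -/
def IsGramOp {H : Type*} [NormedAddCommGroup H] [InnerProductSpace ℝ H]
    {I : Type*} [DecidableEq I] (φ ψ : I → H)
    (Op : lp (fun _ : I => ℝ) 2 →L[ℝ] lp (fun _ : I => ℝ) 2) : Prop :=
  ∀ i k : I, Op (lp.single 2 k (1 : ℝ)) i = ⟪φ i, ψ k⟫

/-! The synthesis operators `T, S : ℓ² → H` of the two Riesz bases are bounded with ranges `V`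
and `W`, and the Gram operators factor as `⟨Φ,Ψ⟩ = T† S`, `⟨Φ,Φ⟩ = T† T`, `⟨Ψ,Ψ⟩ = S† S`, so that
`‖⟨Φ,Φ⟩‖ = ‖T‖²` and `‖⟨Ψ,Ψ⟩‖ = ‖S‖²`. Given `0 ≠ v = T x ∈ V`, the test vector
`w = S (G⁻¹ x) ∈ W` has `⟪v, w⟫ = ‖x‖²` and `‖v‖ ‖w‖ ≤ ‖T‖ ‖S‖ ‖G⁻¹‖ ‖x‖²`. For the pair `(W, V)`
the same argument runs with `G` replaced by its adjoint `S† T`. -/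

open scoped InnerProduct lp

section InfSup

variable {H : Type*} [NormedAddCommGroup H] [InnerProductSpace ℝ H]

lemma le_infSupConst {V W : Submodule ℝ H} {β : ℝ} (hβ : V = ⊥ → β ≤ 0)
    (h : ∀ v ∈ V, v ≠ 0 → ∃ w ∈ W, w ≠ 0 ∧ β * (‖v‖ * ‖w‖) ≤ ⟪v, w⟫) :
    β ≤ infSupConst V W := by
  rcases isEmpty_or_nonempty {v : V // v ≠ 0} with hV | hV
  · rw [infSupConst, Real.iInf_of_isEmpty]
    refine hβ ((Submodule.eq_bot_iff V).2 fun v hv => ?_)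
    by_contra hv0
    exact hV.false ⟨⟨v, hv⟩, by simpa using hv0⟩
  refine le_ciInf fun ⟨⟨v, hvV⟩, hv0⟩ => ?_
  have hv0 : v ≠ 0 := by simpa using hv0
  obtain ⟨w, hwW, hw0, hβw⟩ := h v hvV hv0
  have hbdd : BddAbove (Set.range fun w : {w : W // w ≠ 0} =>
      ⟪v, ((w : W) : H)⟫ / (‖v‖ * ‖((w : W) : H)‖)) :=
    ⟨1, by
      rintro _ ⟨w, rfl⟩
      exact (le_abs_self _).trans (abs_real_inner_div_norm_mul_norm_le_one _ _)⟩
  refine le_trans ?_ (le_ciSup hbdd ⟨⟨w, hwW⟩, by simpa using hw0⟩)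
  rw [le_div_iff₀ (by positivity)]
  exact hβw

theorem inv_norm_div_le_infSupConst_range {E F : Type*}
    [NormedAddCommGroup E] [InnerProductSpace ℝ E] [NormedAddCommGroup F] [InnerProductSpace ℝ F]
    (T : E →L[ℝ] H) (S : F →L[ℝ] H) (R : E →L[ℝ] F)
    (hR : ∀ x, ⟪T x, S (R x)⟫ = ‖x‖ ^ 2) :
    ‖R‖⁻¹ / (‖T‖ * ‖S‖) ≤
      infSupConst (LinearMap.range (T : E →ₗ[ℝ] H)) (LinearMap.range (S : F →ₗ[ℝ] H)) := by
  refine le_infSupConst (fun hT => ?_) ?_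
  · -- `T = 0`, and the junk value `x / 0 = 0` makes the bound `0`
    rw [LinearMap.range_eq_bot] at hT
    simp [show T = 0 from ContinuousLinearMap.coe_injective hT]
  rintro _ ⟨x, rfl⟩ hx
  have hx0 : x ≠ 0 := by rintro rfl; simp at hx
  have hinner : ⟪T x, S (R x)⟫ ≠ 0 := by rw [hR]; positivity
  refine ⟨S (R x), ⟨R x, rfl⟩, fun h0 => hinner (by rw [h0, inner_zero_right]), ?_⟩
  have hSRx : ‖S (R x)‖ ≤ ‖S‖ * (‖R‖ * ‖x‖) :=
    (S.le_opNorm _).trans (by gcongr; exact R.le_opNorm x)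
  calc ‖R‖⁻¹ / (‖T‖ * ‖S‖) * (‖T x‖ * ‖S (R x)‖)
      ≤ ‖R‖⁻¹ / (‖T‖ * ‖S‖) * ((‖T‖ * ‖x‖) * (‖S‖ * (‖R‖ * ‖x‖))) := by
        gcongr
        exact T.le_opNorm x
    _ = (‖R‖⁻¹ * ‖R‖) * ((‖T‖ * ‖S‖)⁻¹ * (‖T‖ * ‖S‖)) * ‖x‖ ^ 2 := by ring
    _ ≤ ‖x‖ ^ 2 :=
        mul_le_of_le_one_left (by positivity)
          (mul_le_one₀ inv_mul_le_one (by positivity) inv_mul_le_one)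
    _ = ⟪T x, S (R x)⟫ := (hR x).symm

end InfSup

lemma lp.hasSum_sq {ι : Type*} (f : ℓ²(ι, ℝ)) : HasSum (fun i => f i ^ 2) (‖f‖ ^ 2) := by
  simpa [← real_inner_self_eq_norm_sq, sq] using lp.hasSum_inner (𝕜 := ℝ) f f

section Synthesis

variable {H : Type*} [NormedAddCommGroup H] [InnerProductSpace ℝ H]
  {ι : Type*} {φ : ι → H} {U : Submodule ℝ H} {A B : ℝ}

namespace IsRieszBasisWith

lemma finset_sum_bounds (h : IsRieszBasisWith φ U A B) (f : ι → ℝ) (t : Finset ι) :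
    A * ∑ i ∈ t, f i ^ 2 ≤ ‖∑ i ∈ t, f i • φ i‖ ^ 2 ∧
      ‖∑ i ∈ t, f i • φ i‖ ^ 2 ≤ B * ∑ i ∈ t, f i ^ 2 := by
  classical
  set c : ι →₀ ℝ := Finsupp.indicator t fun i _ => f i
  have hct : ∀ i ∈ t, c i = f i := fun i hi => Finsupp.indicator_of_mem hi _
  have hsub : c.support ⊆ t := Finsupp.support_indicator_subset _ _
  have hsq : ∑ i ∈ c.support, c i ^ 2 = ∑ i ∈ t, f i ^ 2 :=
    (Finsupp.sum_of_support_subset c hsub (fun _ a => a ^ 2) (by simp)).trans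
      (Finset.sum_congr rfl fun i hi => by rw [hct i hi])
  have hvec : ∑ i ∈ c.support, c i • φ i = ∑ i ∈ t, f i • φ i :=
    (Finsupp.sum_of_support_subset c hsub (fun i a => a • φ i) (by simp)).trans
      (Finset.sum_congr rfl fun i hi => by rw [hct i hi])
  simpa only [hsq, hvec] using h.2 c

lemma hasSum_bounds (h : IsRieszBasisWith φ U A B) {f : ℓ²(ι, ℝ)} {x : H}
    (hx : HasSum (fun i => f i • φ i) x) :
    A * ‖f‖ ^ 2 ≤ ‖x‖ ^ 2 ∧ ‖x‖ ^ 2 ≤ B * ‖f‖ ^ 2 := by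
  have hsq := lp.hasSum_sq f
  have hnorm := (hx.norm.pow 2)
  exact ⟨le_of_tendsto_of_tendsto' (hsq.const_mul A) hnorm fun s => (h.finset_sum_bounds f s).1,
    le_of_tendsto_of_tendsto' hnorm (hsq.const_mul B) fun s => (h.finset_sum_bounds f s).2⟩

lemma summable_smul [CompleteSpace H] (h : IsRieszBasisWith φ U A B) (hB : 0 ≤ B)
    (f : ℓ²(ι, ℝ)) : Summable fun i => f i • φ i := by
  rw [summable_iff_vanishing_norm]
  intro ε hε
  obtain ⟨s, hs⟩ := summable_iff_vanishing_norm.1 (lp.hasSum_sq f).summable (ε ^ 2 / (B + 1))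
    (by positivity)
  refine ⟨s, fun t ht => pow_lt_pow_iff_left₀ (norm_nonneg _) hε.le two_ne_zero |>.1 ?_⟩
  have hst : ∑ i ∈ t, f i ^ 2 < ε ^ 2 / (B + 1) := (le_abs_self _).trans_lt (hs t ht)
  calc ‖∑ i ∈ t, f i • φ i‖ ^ 2 ≤ B * ∑ i ∈ t, f i ^ 2 := (h.finset_sum_bounds f t).2
    _ ≤ (B + 1) * ∑ i ∈ t, f i ^ 2 := by
        gcongr
        linarith
    _ < (B + 1) * (ε ^ 2 / (B + 1)) := by gcongr
    _ = ε ^ 2 := by field_simp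

lemma exists_hasSum_clm [CompleteSpace H] (h : IsRieszBasisWith φ U A B) (hB : 0 ≤ B) :
    ∃ T : ℓ²(ι, ℝ) →L[ℝ] H, ∀ f, HasSum (fun i => f i • φ i) (T f) := by
  have hT := fun f => (h.summable_smul hB f).hasSum
  let T : ℓ²(ι, ℝ) →ₗ[ℝ] H :=
    { toFun f := ∑' i, f i • φ i
      map_add' f g := by
        simpa only [lp.coeFn_add, Pi.add_apply, add_smul] using ((hT f).add (hT g)).tsum_eq
      map_smul' c f := by
        simpa only [lp.coeFn_smul, Pi.smul_apply, smul_eq_mul, mul_smul, RingHom.id_apply]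
          using ((hT f).const_smul c).tsum_eq }
  refine ⟨T.mkContinuous √B fun f => ?_, hT⟩
  rw [← Real.sqrt_sq (norm_nonneg (T f)), ← Real.sqrt_sq (norm_nonneg f), ← Real.sqrt_mul hB]
  exact Real.sqrt_le_sqrt (h.hasSum_bounds (hT f)).2

end IsRieszBasisWith

theorem IsRieszBasis.exists_synthesis [CompleteSpace H] [DecidableEq ι] (h : IsRieszBasis φ U) :
    ∃ T : ℓ²(ι, ℝ) →L[ℝ] H,
      LinearMap.range (T : ℓ²(ι, ℝ) →ₗ[ℝ] H) = U ∧ ∀ i, T (lp.single 2 i 1) = φ i := by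
  obtain ⟨A, B, hA, hAB, h⟩ := h
  obtain ⟨T, hT⟩ := h.exists_hasSum_clm (hA.le.trans hAB)
  have hTφ : ∀ i, T (lp.single 2 i 1) = φ i := fun i =>
    ((hT _).unique <| hasSum_single i fun j hj => by
      rw [lp.single_apply_ne 2 i _ hj, zero_smul]).trans (by rw [lp.single_apply_self, one_smul])
  have hTU : LinearMap.range (T : ℓ²(ι, ℝ) →ₗ[ℝ] H) ≤ U := by
    rintro _ ⟨f, rfl⟩
    have hUc : IsClosed (U : Set H) := h.1 ▸ Submodule.isClosed_topologicalClosure _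
    refine hUc.mem_of_tendsto (hT f) (.of_forall fun s => U.sum_mem fun i _ => U.smul_mem _ ?_)
    exact h.1 ▸ Submodule.le_topologicalClosure _ (Submodule.subset_span ⟨i, rfl⟩)
  have hTanti : AntilipschitzWith ⟨(√A)⁻¹, by positivity⟩ T := by
    refine T.antilipschitz_of_bound fun f => ?_
    change ‖f‖ ≤ (√A)⁻¹ * ‖T f‖
    rw [← div_eq_inv_mul, le_div_iff₀' (by positivity)]
    rw [← Real.sqrt_sq (norm_nonneg (T f)), ← Real.sqrt_sq (norm_nonneg f), ← Real.sqrt_mul hA.le]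
    exact Real.sqrt_le_sqrt (h.hasSum_bounds (hT f)).1
  refine ⟨T, le_antisymm hTU ?_, hTφ⟩
  rw [← h.1, ← T.closed_range_of_antilipschitz hTanti]
  refine Submodule.topologicalClosure_mono (Submodule.span_le.2 ?_)
  rintro _ ⟨i, rfl⟩
  exact ⟨_, hTφ i⟩

end Synthesis

theorem lp.ext_continuousLinearMap_single {ι E : Type*} [DecidableEq ι] [NormedAddCommGroup E]
    [NormedSpace ℝ E] {p : ENNReal} [Fact (1 ≤ p)] (hp : p ≠ ⊤)
    {L₁ L₂ : lp (fun _ : ι => ℝ) p →L[ℝ] E}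
    (h : ∀ i, L₁ (lp.single p i (1 : ℝ)) = L₂ (lp.single p i (1 : ℝ))) : L₁ = L₂ := by
  ext f
  have hsingle : ∀ i, lp.single (E := fun _ : ι => ℝ) p i (f i) = f i • lp.single p i 1 :=
    fun i => by rw [← lp.single_smul, smul_eq_mul, mul_one]
  refine ((lp.hasSum_single hp f).mapL L₁).unique ?_
  convert (lp.hasSum_single hp f).mapL L₂ using 1
  ext i
  simp only [hsingle, map_smul, h]

open ContinuousLinearMap in
theorem IsGramOp.eq_adjoint_comp {H : Type*} [NormedAddCommGroup H] [InnerProductSpace ℝ H]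
    [CompleteSpace H] {ι : Type*} [DecidableEq ι] {φ ψ : ι → H} {G : ℓ²(ι, ℝ) →L[ℝ] ℓ²(ι, ℝ)}
    (hG : IsGramOp φ ψ G) {T S : ℓ²(ι, ℝ) →L[ℝ] H} (hT : ∀ i, T (lp.single 2 i 1) = φ i)
    (hS : ∀ i, S (lp.single 2 i 1) = ψ i) : G = T† ∘L S := by
  refine lp.ext_continuousLinearMap_single ENNReal.ofNat_ne_top fun k =>
    lp.ext <| funext fun i => ?_
  have hcoord : ∀ y : ℓ²(ι, ℝ), ⟪lp.single 2 i (1 : ℝ), y⟫ = y i := fun y => by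
    simp [lp.inner_single_left]
  rw [hG i k, ← hcoord, comp_apply, adjoint_inner_right, hT, hS]

theorem stmt5_general {H : Type*} [NormedAddCommGroup H] [InnerProductSpace ℝ H] [CompleteSpace H]
    {I : Type*} [DecidableEq I]
    (V W : Submodule ℝ H)
    (φ ψ : I → H) (hφ : IsRieszBasis φ V) (hψ : IsRieszBasis ψ W)
    (G Gφφ Gψψ Ginv : lp (fun _ : I => ℝ) 2 →L[ℝ] lp (fun _ : I => ℝ) 2)
    (hG : IsGramOp φ ψ G) (hGφφ : IsGramOp φ φ Gφφ) (hGψψ : IsGramOp ψ ψ Gψψ)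
    (hGinv₁ : G.comp Ginv = ContinuousLinearMap.id ℝ (lp (fun _ : I => ℝ) 2))
    (hGinv₂ : Ginv.comp G = ContinuousLinearMap.id ℝ (lp (fun _ : I => ℝ) 2)) :
    ‖Ginv‖⁻¹ / Real.sqrt (‖Gφφ‖ * ‖Gψψ‖) ≤ infSupConst V W ∧
    ‖Ginv‖⁻¹ / Real.sqrt (‖Gφφ‖ * ‖Gψψ‖) ≤ infSupConst W V := by
  obtain ⟨T, rfl, hTφ⟩ := hφ.exists_synthesis
  obtain ⟨S, rfl, hSψ⟩ := hψ.exists_synthesis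
  have hGTS : G = T† ∘L S := hG.eq_adjoint_comp hTφ hSψ
  have hnorm : √(‖Gφφ‖ * ‖Gψψ‖) = ‖T‖ * ‖S‖ := by
    rw [hGφφ.eq_adjoint_comp hTφ hTφ, hGψψ.eq_adjoint_comp hSψ hSψ,
      ContinuousLinearMap.norm_adjoint_comp_self, ContinuousLinearMap.norm_adjoint_comp_self,
      mul_mul_mul_comm, Real.sqrt_mul_self (by positivity)]
  rw [hnorm]
  constructor
  · refine inv_norm_div_le_infSupConst_range T S Ginv fun x => ?_
    rw [← ContinuousLinearMap.adjoint_inner_right, ← ContinuousLinearMap.comp_apply, ← hGTS,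
      ← ContinuousLinearMap.comp_apply, hGinv₁, ContinuousLinearMap.id_apply,
      real_inner_self_eq_norm_sq]
  · have hSTR := inv_norm_div_le_infSupConst_range S T (Ginv†) fun y => by
      rw [← ContinuousLinearMap.adjoint_inner_left, ← ContinuousLinearMap.comp_apply, ← hGTS,
        ContinuousLinearMap.adjoint_inner_right, ← ContinuousLinearMap.comp_apply, hGinv₂,
        ContinuousLinearMap.id_apply, real_inner_self_eq_norm_sq]
    rwa [LinearIsometryEquiv.norm_map, mul_comm] at hSTR

theorem stmt5 {H : Type*} [NormedAddCommGroup H] [InnerProductSpace ℝ H] [CompleteSpace H]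
    {I : Type*} [Countable I] [DecidableEq I]
    (V W : Submodule ℝ H) (hVc : IsClosed (V : Set H)) (hWc : IsClosed (W : Set H))
    (φ ψ : I → H) (hφ : IsRieszBasis φ V) (hψ : IsRieszBasis ψ W)
    (G Gφφ Gψψ Ginv : lp (fun _ : I => ℝ) 2 →L[ℝ] lp (fun _ : I => ℝ) 2)
    (hG : IsGramOp φ ψ G) (hGφφ : IsGramOp φ φ Gφφ) (hGψψ : IsGramOp ψ ψ Gψψ)
    (hGinv₁ : G.comp Ginv = ContinuousLinearMap.id ℝ (lp (fun _ : I => ℝ) 2))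
    (hGinv₂ : Ginv.comp G = ContinuousLinearMap.id ℝ (lp (fun _ : I => ℝ) 2)) :
    ‖Ginv‖⁻¹ / Real.sqrt (‖Gφφ‖ * ‖Gψψ‖) ≤ infSupConst V W ∧
    ‖Ginv‖⁻¹ / Real.sqrt (‖Gφφ‖ * ‖Gψψ‖) ≤ infSupConst W V :=
  stmt5_general V W φ ψ hφ hψ G Gφφ Gψψ Ginv hG hGφφ hGψψ hGinv₁ hGinv₂
end
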